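/- arXiv:2404.15169 — 3 statements merged into one kernel-verified Lean document; each statement's English description precedes it below -/
import Mathlib

section
/- Let Cl(p,q,r) be a Clifford algebra with n = p+q+r, and let M ∈ Cl^m(p,q,r), K ∈ Cl^k(p,q,r), and L ∈ Λ^{n−m}_r (an element of exterior degree n−m in the subalgebra generated by the null generators). If m and k are both even, or m, k, and n are all odd, then (KL)M = M(KL). -/
open CliffordAlgebra

noncomputable section

/-- Diagonal weights: `p` entries `+1`, `q` entries `-1`, `r` entries `0`. -/
def cliffSig (p q : ℕ) (i : ℕ) : ℝ := if i < p then 1 else if i < p + q then -1 else 0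

/-- The quadratic form of signature `(p, q, r)` on `ℝ^(p+q+r)`. -/
def Qf (p q r : ℕ) : QuadraticForm ℝ (Fin (p + q + r) → ℝ) :=
  QuadraticMap.weightedSumSquares ℝ (fun i : Fin (p + q + r) => cliffSig p q (i : ℕ))

/-- The `i`-th generator `e_i` of `Cl(p,q,r)`. -/
def gen (p q r : ℕ) (i : Fin (p + q + r)) : CliffordAlgebra (Qf p q r) :=
  ι (Qf p q r) (Pi.single i 1)

/-- The grade-`m` subspace `Cl^m(p,q,r)`: span of products of `m` distinct generators
with increasing indices. -/
def gradeSubspace (p q r m : ℕ) : Submodule ℝ (CliffordAlgebra (Qf p q r)) :=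
  Submodule.span ℝ {x | ∃ l : List (Fin (p + q + r)),
    l.Chain' (· < ·) ∧ l.length = m ∧ x = (l.map (gen p q r)).prod}

/-- `Λ_r`: the subalgebra generated by the `r` null generators. -/
def LambdaR (p q r : ℕ) : Subalgebra ℝ (CliffordAlgebra (Qf p q r)) :=
  Algebra.adjoin ℝ {x | ∃ i : Fin (p + q + r), p + q ≤ (i : ℕ) ∧ x = gen p q r i}

/-- `Λ^d_r`: the degree-`d` component of `Λ_r`. -/
def LambdaDeg (p q r d : ℕ) : Submodule ℝ (CliffordAlgebra (Qf p q r)) :=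
  Submodule.span ℝ {x | ∃ l : List (Fin (p + q + r)),
    l.Chain' (· < ·) ∧ l.length = d ∧ (∀ i ∈ l, p + q ≤ (i : ℕ)) ∧
    x = (l.map (gen p q r)).prod}

/-- The pseudoscalar `e_1 ⋯ e_n`. -/
def pseudoscalar (p q r : ℕ) : CliffordAlgebra (Qf p q r) :=
  ((List.finRange (p + q + r)).map (gen p q r)).prod

/-!
Monomials `e_a = e_{a₁} ⋯ e_{aₖ}` in distinct generators satisfy
`e_a e_b = (-1)^(|a||b| + |a ∩ b|) e_b e_a`, and a product of two monomials that share a null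
generator vanishes. For monomials `K, L, M` as in the theorem, either a null generator occurs in
both `K` and `L` or in both `KL` and `M`, so both sides vanish, or `L` is exactly the complement
of `M`, whence `K ⊆ M` and the sign `(-1)^((k + n - m) m + k)` is `+1` under either parity
hypothesis. Bilinearity extends this from monomials to their spans.
-/

lemma List.Nodup.mem_of_length_eq_card {α : Type*} [Fintype α] {l : List α} (hl : l.Nodup)
    (hlen : l.length = Fintype.card α) (a : α) : a ∈ l := by
  classical
  have huniv : l.toFinset = Finset.univ :=
    Finset.eq_univ_of_card _ (by rw [List.toFinset_card_of_nodup hl, hlen])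
  rw [← List.mem_toFinset, huniv]
  exact Finset.mem_univ a

lemma even_commutation_sign {m k n : ℕ}
    (h : (Even m ∧ Even k) ∨ (Odd m ∧ Odd k ∧ Odd n)) : Even ((k + (n - m)) * m + k) := by
  rcases h with ⟨hm, hk⟩ | ⟨hm, hk, hn⟩
  · exact (hm.mul_left _).add hk
  · exact ((hk.add_even (Nat.Odd.sub_odd hn hm)).mul hm).add_odd hk

section Monomials

variable {p q r : ℕ}

lemma Qf_apply_single (i : Fin (p + q + r)) : Qf p q r (Pi.single i 1) = cliffSig p q i := by
  simp [Qf, Pi.single_apply]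

lemma gen_mul_self (i : Fin (p + q + r)) :
    gen p q r i * gen p q r i = algebraMap ℝ _ (cliffSig p q i) := by
  rw [gen, ι_sq_scalar, Qf_apply_single]

lemma gen_mul_self_of_null {i : Fin (p + q + r)} (hi : p + q ≤ (i : ℕ)) :
    gen p q r i * gen p q r i = 0 := by
  rw [gen_mul_self, cliffSig, if_neg (by omega), if_neg (by omega), map_zero]

lemma gen_mul_gen_anticomm {i j : Fin (p + q + r)} (h : i ≠ j) :
    gen p q r i * gen p q r j = -(gen p q r j * gen p q r i) := by
  refine ι_mul_ι_comm_of_isOrtho ?_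
  rw [QuadraticMap.isOrtho_def]
  simp only [Qf, QuadraticMap.weightedSumSquares_apply, Pi.add_apply, Pi.single_apply]
  rw [← Finset.sum_add_distrib]
  refine Finset.sum_congr rfl fun l _ => ?_
  rcases eq_or_ne l i with rfl | hi <;> rcases eq_or_ne l j with rfl | hj <;> simp_all

def genProd (l : List (Fin (p + q + r))) : CliffordAlgebra (Qf p q r) :=
  (l.map (gen p q r)).prod

@[simp] lemma genProd_nil : genProd ([] : List (Fin (p + q + r))) = 1 := rfl

@[simp] lemma genProd_cons (i : Fin (p + q + r)) (l : List (Fin (p + q + r))) :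
    genProd (i :: l) = gen p q r i * genProd l := by
  simp [genProd]

lemma genProd_append (a b : List (Fin (p + q + r))) :
    genProd (a ++ b) = genProd a * genProd b := by
  simp [genProd]

lemma gen_mul_genProd_of_notMem {i : Fin (p + q + r)} {b : List (Fin (p + q + r))}
    (hi : i ∉ b) : gen p q r i * genProd b = (-1 : ℝ) ^ b.length • (genProd b * gen p q r i) := by
  induction b with
  | nil => simp
  | cons j b ih =>
    rw [List.mem_cons, not_or] at hi
    rw [genProd_cons, ← mul_assoc, gen_mul_gen_anticomm hi.1, neg_mul, mul_assoc, ih hi.2,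
      mul_smul_comm, ← mul_assoc, List.length_cons, pow_succ, mul_neg_one, neg_smul]

lemma genProd_mul_gen_of_notMem {i : Fin (p + q + r)} {b : List (Fin (p + q + r))}
    (hi : i ∉ b) : genProd b * gen p q r i = (-1 : ℝ) ^ b.length • (gen p q r i * genProd b) := by
  rw [gen_mul_genProd_of_notMem hi, smul_smul, ← pow_add, Even.neg_one_pow ⟨_, rfl⟩, one_smul]

lemma gen_mul_genProd_of_null_mem {i : Fin (p + q + r)} (hi : p + q ≤ (i : ℕ))
    {b : List (Fin (p + q + r))} (hib : i ∈ b) : gen p q r i * genProd b = 0 := by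
  obtain ⟨b₁, b₂, rfl⟩ := List.append_of_mem hib
  induction b₁ with
  | nil => rw [List.nil_append, genProd_cons, ← mul_assoc, gen_mul_self_of_null hi, zero_mul]
  | cons j b₁ ih =>
    rcases eq_or_ne i j with rfl | hij
    · rw [List.cons_append, genProd_cons, ← mul_assoc, gen_mul_self_of_null hi, zero_mul]
    · rw [List.cons_append, genProd_cons, ← mul_assoc, gen_mul_gen_anticomm hij, neg_mul,
        mul_assoc, ih (by simp), mul_zero, neg_zero]

lemma genProd_mul_genProd_of_null_mem {i : Fin (p + q + r)} (hi : p + q ≤ (i : ℕ))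
    {a b : List (Fin (p + q + r))} (hia : i ∈ a) (hib : i ∈ b) : genProd a * genProd b = 0 := by
  obtain ⟨a₁, a₂, rfl⟩ := List.append_of_mem hia
  rw [genProd_append, genProd_cons, mul_assoc, mul_assoc, ← genProd_append,
    gen_mul_genProd_of_null_mem hi (List.mem_append_right _ hib), mul_zero]

lemma gen_mul_genProd {b : List (Fin (p + q + r))} (hb : b.Nodup) (i : Fin (p + q + r)) :
    gen p q r i * genProd b
      = (-1 : ℝ) ^ (b.length + if i ∈ b then 1 else 0) • (genProd b * gen p q r i) := by
  by_cases hib : i ∈ b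
  swap
  · rw [if_neg hib, add_zero, gen_mul_genProd_of_notMem hib]
  obtain ⟨b₁, b₂, rfl⟩ := List.append_of_mem hib
  obtain ⟨-, hb₂, hdisj⟩ := List.nodup_append.mp hb
  have hib₁ : i ∉ b₁ := fun h => hdisj _ h _ List.mem_cons_self rfl
  have hib₂ : i ∉ b₂ := (List.nodup_cons.mp hb₂).1
  set c := genProd b₁ * (gen p q r i * gen p q r i) * genProd b₂
  have hleft : gen p q r i * genProd (b₁ ++ i :: b₂) = (-1 : ℝ) ^ b₁.length • c := by
    rw [genProd_append, genProd_cons, ← mul_assoc, gen_mul_genProd_of_notMem hib₁,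
      smul_mul_assoc]
    simp only [c, mul_assoc]
  have hright : genProd (b₁ ++ i :: b₂) * gen p q r i = (-1 : ℝ) ^ b₂.length • c := by
    rw [genProd_append, genProd_cons, mul_assoc, mul_assoc, genProd_mul_gen_of_notMem hib₂,
      mul_smul_comm, mul_smul_comm]
    simp only [c, mul_assoc]
  have hlen : (b₁ ++ i :: b₂).length + 1 + b₂.length = b₁.length + 2 * (b₂.length + 1) := by
    simp only [List.length_append, List.length_cons]
    omega
  rw [if_pos hib, hleft, hright, smul_smul, ← pow_add, hlen, pow_add, pow_mul, neg_one_sq,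
    one_pow, mul_one]

lemma genProd_mul_genProd_comm {b : List (Fin (p + q + r))} (hb : b.Nodup)
    (a : List (Fin (p + q + r))) :
    genProd a * genProd b
      = (-1 : ℝ) ^ (a.length * b.length + (a.filter (· ∈ b)).length) • (genProd b * genProd a) := by
  induction a with
  | nil => simp
  | cons i a ih =>
    rw [genProd_cons, mul_assoc, ih, mul_smul_comm, ← mul_assoc, gen_mul_genProd hb i,
      smul_mul_assoc, smul_smul, ← pow_add, mul_assoc]
    congr 2
    by_cases hib : i ∈ b <;> simp [hib] <;> ring

lemma commute_genProd_mul_genProd {lK lL lM : List (Fin (p + q + r))} (hL : lL.Nodup)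
    (hM : lM.Nodup) (hLnull : ∀ i ∈ lL, p + q ≤ (i : ℕ))
    (hLlen : lL.length = p + q + r - lM.length)
    (h : (Even lM.length ∧ Even lK.length) ∨
      (Odd lM.length ∧ Odd lK.length ∧ Odd (p + q + r))) :
    Commute (genProd lK * genProd lL) (genProd lM) := by
  by_cases hKL : ∃ i ∈ lK, i ∈ lL
  · obtain ⟨i, hiK, hiL⟩ := hKL
    rw [genProd_mul_genProd_of_null_mem (hLnull i hiL) hiK hiL]
    exact Commute.zero_left _
  rw [← genProd_append]
  by_cases hshared : ∃ i ∈ lK ++ lL, p + q ≤ (i : ℕ) ∧ i ∈ lM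
  · obtain ⟨i, hiKL, hi, hiM⟩ := hshared
    rw [Commute, SemiconjBy, genProd_mul_genProd_of_null_mem hi hiKL hiM,
      genProd_mul_genProd_of_null_mem hi hiM hiKL]
  simp only [not_exists, not_and] at hKL hshared
  have hML : lM.Disjoint lL := fun i hiM hiL =>
    hshared i (List.mem_append_right _ hiL) (hLnull i hiL) hiM
  have hMlen : lM.length ≤ p + q + r := by simpa using hM.length_le_card
  have hcover (i : Fin (p + q + r)) : i ∈ lM ∨ i ∈ lL :=
    List.mem_append.mp <| (hM.append hL hML).mem_of_length_eq_card (by simp; omega) i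
  have hKM : lK.filter (· ∈ lM) = lK :=
    List.filter_eq_self.mpr fun i hiK => by simpa using (hcover i).resolve_right (hKL i hiK)
  have hLM : lL.filter (· ∈ lM) = [] :=
    List.filter_eq_nil_iff.mpr fun i hiL => by simpa using fun hiM => hML hiM hiL
  rw [Commute, SemiconjBy, genProd_mul_genProd_comm hM, List.filter_append, hKM, hLM,
    List.append_nil, List.length_append, hLlen, (even_commutation_sign h).neg_one_pow,
    one_smul]

end Monomials

/-- For `M ∈ Cl^m`, `K ∈ Cl^k`, `L ∈ Λ^{n-m}_r`: if `m, k` are even, or `m, k, n` are all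
odd, then `(KL)M = M(KL)`. -/
theorem stmt8 (p q r m k : ℕ) (M K L : CliffordAlgebra (Qf p q r))
    (hM : M ∈ gradeSubspace p q r m) (hK : K ∈ gradeSubspace p q r k)
    (hL : L ∈ LambdaDeg p q r (p + q + r - m))
    (h : (Even m ∧ Even k) ∨ (Odd m ∧ Odd k ∧ Odd (p + q + r))) :
    K * L * M = M * (K * L) := by
  have hKL := Submodule.mul_mem_mul hK hL
  rw [gradeSubspace, LambdaDeg, Submodule.span_mul_span] at hKL
  refine (Commute.span_left (fun x hx => Commute.span_right (fun y hy => ?_) M hM) _ hKL).eq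
  obtain ⟨_, ⟨lK, -, rfl, rfl⟩, _, ⟨lL, hLsorted, hLlen, hLnull, rfl⟩, rfl⟩ := hx
  obtain ⟨lM, hMsorted, rfl, rfl⟩ := hy
  exact commute_genProd_mul_genProd hLsorted.sortedLT.nodup hMsorted.sortedLT.nodup hLnull
    hLlen h
end
end

section
/- Let Cl(p,q,r) be a Clifford algebra with n = p+q+r even. The center of Cl(p,q,r) equals the even part of Λ_r, the subalgebra generated by the null generators. In particular, for a non-degenerate form of even dimension the center consists only of the scalars. -/
open CliffordAlgebra

noncomputable section

/-!
Write `e S` for the ordered monomial of a finite set `S` of indices. Left multiplication by a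
generator acts on coordinates by `e i * e (S ∆ {i}) = ± (w i or 1) • e S`; these operators
satisfy the Clifford relations, so they define a representation of the Clifford algebra on
`Finset ι → R`, and evaluating it at `δ_∅` gives coordinates in which the `e S` form a basis
(surjectivity is clear and a rank count gives injectivity).

Moving `e i` across `e S` gives `e S * e i = (-1) ^ #(S \ {i}) • e i * e S`. Hence `X` commutes
with `e i` iff every `S` in the support of `X` with `#(S \ {i})` odd contains `i` and `w i = 0`.
If `n` is even, a set of odd size misses some `i`, so the support of a central element consists
of even sets of null indices, which is exactly membership in the even part of `Λ`.
-/

open QuadraticMap Finset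
open scoped symmDiff

namespace Finset

variable {α : Type*} [DecidableEq α]

theorem mem_symmDiff_singleton {i j : α} {S : Finset α} :
    i ∈ S ∆ {j} ↔ (i ∈ S ↔ i ≠ j) := by
  by_cases h : i = j <;> simp [mem_symmDiff, h]

theorem insert_symmDiff_singleton_self {a : α} {T : Finset α} (ha : a ∉ T) :
    insert a T ∆ {a} = T := by
  ext k; by_cases hk : k = a <;> simp [mem_symmDiff, hk, ha]

theorem symmDiff_singleton_erase (S : Finset α) (i : α) : (S ∆ {i}).erase i = S.erase i := by
  ext k; by_cases hk : k = i <;> simp [mem_symmDiff, hk]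

theorem neg_one_pow_card_filter_symmDiff_singleton {R : Type*} [CommRing R]
    (p : α → Prop) [DecidablePred p] (S : Finset α) (j : α) :
    (-1 : R) ^ #{k ∈ S ∆ {j} | p k} = (if p j then -1 else 1) * (-1) ^ #{k ∈ S | p k} := by
  by_cases hj : j ∈ S
  · have hS : S ∆ {j} = S.erase j := by
      ext k; by_cases hk : k = j <;> simp [mem_symmDiff, hk, hj]
    rw [hS, filter_erase]
    split_ifs with hp
    · have hjp : j ∈ S.filter p := mem_filter.2 ⟨hj, hp⟩
      rw [← card_erase_add_one hjp, pow_succ]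
      ring
    · rw [erase_eq_of_notMem (fun h => hp (mem_filter.1 h).2), one_mul]
  · have hS : S ∆ {j} = insert j S := by
      ext k; by_cases hk : k = j <;> simp [mem_symmDiff, hk, hj]
    rw [hS, filter_insert]
    split_ifs with hp
    · rw [card_insert_of_notMem (fun h => hj (mem_filter.1 h).1), pow_succ, mul_comm]
    · rw [one_mul]

theorem forall_odd_card_erase_iff [Fintype α] (hn : Even (Fintype.card α)) (T : Finset α)
    (P : α → Prop) :
    (∀ i, Odd #(T.erase i) → i ∈ T ∧ P i) ↔ Even #T ∧ ∀ i ∈ T, P i := by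
  constructor
  · intro h
    have hT : Even #T := by
      by_contra hodd
      obtain ⟨i, hi⟩ : ∃ i, i ∉ T := by
        by_contra! hall
        exact hodd (eq_univ_of_forall hall ▸ card_univ (α := α) ▸ hn)
      exact hi (h i (by rwa [erase_eq_of_notMem hi, ← Nat.not_even_iff_odd])).1
    refine ⟨hT, fun i hi => (h i ?_).2⟩
    rw [card_erase_of_mem hi]
    exact Nat.Even.sub_odd (card_pos.2 ⟨i, hi⟩) hT odd_one
  · rintro ⟨hT, hP⟩ i hodd
    by_cases hi : i ∈ T
    · exact ⟨hi, hP i hi⟩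
    · rw [erase_eq_of_notMem hi, ← Nat.not_even_iff_odd] at hodd
      exact absurd hT hodd

end Finset

theorem neg_one_pow_mul_eq_self_iff {R : Type*} [Ring R] [NoZeroDivisors R] [CharZero R]
    {k : ℕ} {y : R} : (-1) ^ k * y = y ↔ Even k ∨ y = 0 := by
  rcases Nat.even_or_odd k with hk | hk
  · simp [hk.neg_one_pow, hk]
  · simp [hk.neg_one_pow, Nat.not_even_iff_odd.2 hk, CharZero.neg_eq_self_iff]

theorem sum_smul_mul_self_of_anticomm {R ι A : Type*} [CommRing R] [Fintype ι] [Ring A]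
    [Algebra R A] (w : ι → R) (a : ι → A) (hsq : ∀ i, a i * a i = algebraMap R A (w i))
    (hanti : ∀ i j, i ≠ j → a i * a j + a j * a i = 0) (v : ι → R) :
    (∑ i, v i • a i) * (∑ i, v i • a i) = algebraMap R A (weightedSumSquares R w v) := by
  classical
  rw [weightedSumSquares_apply]
  induction (univ : Finset ι) using Finset.induction_on with
  | empty => simp
  | insert j s hj ih =>
    have hcross :
        v j • a j * ∑ i ∈ s, v i • a i + (∑ i ∈ s, v i • a i) * v j • a j = 0 := by
      rw [mul_sum, sum_mul, ← sum_add_distrib]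
      refine sum_eq_zero fun i hi => ?_
      rw [smul_mul_smul_comm, smul_mul_smul_comm, mul_comm (v i), ← smul_add, add_comm,
        hanti i j (ne_of_mem_of_not_mem hi hj), smul_zero]
    have hexpand : ∀ x y : A, (x + y) * (x + y) = x * x + (x * y + y * x) + y * y := by
      intro x y; noncomm_ring
    rw [sum_insert hj, sum_insert hj, hexpand, hcross, ih, smul_mul_smul_comm, hsq,
      Algebra.smul_def, ← map_mul, add_zero, ← map_add, smul_eq_mul, mul_comm (w j)]

theorem CliffordAlgebra.nonempty_basis_finset {R M I : Type*} [CommRing R] [AddCommGroup M]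
    [Module R M] [LinearOrder I] (Q : QuadraticForm R M) (b : Module.Basis I R M) :
    Nonempty (Module.Basis (Finset I) R (CliffordAlgebra Q)) :=
  ⟨b.ExteriorAlgebra.map <| changeFormEquiv (B := Q.toBilin b) <| by
    rw [QuadraticMap.toQuadraticMap_toBilin, sub_zero]⟩

namespace DiagonalClifford

variable {R : Type*} [CommRing R] {ι : Type*} [LinearOrder ι] (w : ι → R)

/-- The sign picked up when `e i` is moved into its place in the ordered monomial `e S`. -/
def sign (i : ι) (S : Finset ι) : R := (-1) ^ #{j ∈ S | j < i}

def coeff (i : ι) (S : Finset ι) : R := sign i S * if i ∈ S then 1 else w i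

/-- Left multiplication by `e i` in monomial coordinates:
`e i * e (S ∆ {i}) = coeff w i S • e S`. -/
def op (i : ι) : Module.End R (Finset ι → R) :=
  LinearMap.pi fun S => coeff w i S • LinearMap.proj (S ∆ {i})

theorem op_apply (i : ι) (f : Finset ι → R) (S : Finset ι) :
    op w i f S = coeff w i S * f (S ∆ {i}) := rfl

theorem sign_symmDiff (i j : ι) (S : Finset ι) :
    sign i (S ∆ {j}) = (if j < i then -1 else 1) * (sign i S : R) :=
  neg_one_pow_card_filter_symmDiff_singleton _ S j

theorem sign_mul_self (i : ι) (S : Finset ι) : sign i S * (sign i S : R) = 1 := by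
  rw [sign, ← mul_pow]; simp

theorem coeff_mul_coeff_symmDiff_self (i : ι) (S : Finset ι) :
    coeff w i S * coeff w i (S ∆ {i}) = w i := by
  have hsign := sign_mul_self (R := R) i S
  by_cases h : i ∈ S <;>
    simp only [coeff, sign_symmDiff, lt_irrefl, if_false, one_mul, mem_symmDiff_singleton, h,
      ne_eq, not_true, iff_false, if_true] <;>
    linear_combination w i * hsign

theorem coeff_mul_coeff_symmDiff_of_ne {i j : ι} (hij : i ≠ j) (S : Finset ι) :
    coeff w i S * coeff w j (S ∆ {i}) = -(coeff w j S * coeff w i (S ∆ {j})) := by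
  have hi : i ∈ S ∆ {j} ↔ i ∈ S := by simp [mem_symmDiff_singleton, hij]
  have hj : j ∈ S ∆ {i} ↔ j ∈ S := by simp [mem_symmDiff_singleton, hij.symm]
  simp only [coeff, sign_symmDiff, hi, hj]
  rcases hij.lt_or_gt with h | h <;> simp only [h, h.not_gt, if_true, if_false] <;>
    split_ifs <;> ring

theorem op_mul_self (i : ι) : op w i * op w i = algebraMap R _ (w i) := by
  ext f S
  simp only [Module.End.mul_apply, op_apply, symmDiff_symmDiff_cancel_right, ← mul_assoc,
    coeff_mul_coeff_symmDiff_self, Module.algebraMap_end_apply, Pi.smul_apply, smul_eq_mul]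

theorem op_mul_op_add_swap {i j : ι} (hij : i ≠ j) : op w i * op w j + op w j * op w i = 0 := by
  ext f S
  simp only [LinearMap.add_apply, Module.End.mul_apply, op_apply, ← mul_assoc,
    coeff_mul_coeff_symmDiff_of_ne w hij, symmDiff_right_comm S {i} {j}, Pi.add_apply,
    LinearMap.zero_apply, Pi.zero_apply]
  ring

theorem op_single_of_forall_lt (a : ι) (T : Finset ι) (haT : ∀ b ∈ T, a < b) :
    op w a (Pi.single T 1) = Pi.single (insert a T) 1 := by
  have ha : a ∉ T := fun h => lt_irrefl a (haT a h)
  ext S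
  rw [op_apply, Pi.single_apply, Pi.single_apply]
  have hS : S ∆ {a} = T ↔ S = insert a T := by
    conv_lhs => rw [← insert_symmDiff_singleton_self ha]
    exact symmDiff_left_inj
  by_cases h : S = insert a T
  · have hsign : sign a (insert a T) = (1 : R) := by
      rw [sign, filter_insert, if_neg (lt_irrefl a),
        filter_false_of_mem fun b hb => (haT b hb).not_gt, card_empty, pow_zero]
    rw [if_pos (hS.2 h), if_pos h, h, coeff, hsign, if_pos (mem_insert_self a T), one_mul,
      one_mul]
  · rw [if_neg (mt hS.1 h), if_neg h, mul_zero]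

theorem coeff_symmDiff_self_eq_zero_iff [NoZeroDivisors R] [Nontrivial R] (i : ι)
    (T : Finset ι) :
    coeff w i (T ∆ {i}) = 0 ↔ i ∈ T ∧ w i = 0 := by
  have hsign : sign i (T ∆ {i}) ≠ (0 : R) := fun h =>
    zero_ne_one (α := R) (by simpa [h] using sign_mul_self (R := R) i (T ∆ {i}))
  by_cases hi : i ∈ T <;> simp [coeff, hsign, mem_symmDiff_singleton, hi]

variable [Fintype ι]

def gen (i : ι) : CliffordAlgebra (weightedSumSquares R w) :=
  CliffordAlgebra.ι _ (Pi.single i 1)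

def rep : CliffordAlgebra (weightedSumSquares R w) →ₐ[R] Module.End R (Finset ι → R) :=
  CliffordAlgebra.lift _ ⟨Fintype.linearCombination R (op w), fun v => by
    simpa only [Fintype.linearCombination_apply] using
      sum_smul_mul_self_of_anticomm w (op w) (op_mul_self w) (fun _ _ => op_mul_op_add_swap w) v⟩

theorem rep_gen (i : ι) : rep w (gen w i) = op w i := by
  rw [rep, gen, lift_ι_apply, Fintype.linearCombination_apply_single, one_smul]

def coords : CliffordAlgebra (weightedSumSquares R w) →ₗ[R] Finset ι → R :=
  LinearMap.applyₗ (Pi.single ∅ 1) ∘ₗ (rep w).toLinearMap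

theorem coords_apply (X : CliffordAlgebra (weightedSumSquares R w)) :
    coords w X = rep w X (Pi.single ∅ 1) := rfl

theorem coords_one : coords w 1 = Pi.single ∅ 1 := by
  rw [coords_apply, map_one, Module.End.one_apply]

theorem coords_gen_mul (i : ι) (X : CliffordAlgebra (weightedSumSquares R w)) :
    coords w (gen w i * X) = op w i (coords w X) := by
  rw [coords_apply, map_mul, rep_gen, Module.End.mul_apply, coords_apply]

def mono (S : Finset ι) : CliffordAlgebra (weightedSumSquares R w) :=
  ((S.sort).map (gen w)).prod

theorem coords_prod_map_gen {l : List ι} (hl : l.Pairwise (· < ·)) :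
    coords w (l.map (gen w)).prod = Pi.single l.toFinset 1 := by
  induction l with
  | nil => simpa using coords_one w
  | cons a t ih =>
    rw [List.pairwise_cons] at hl
    rw [List.map_cons, List.prod_cons, coords_gen_mul, ih hl.2, List.toFinset_cons,
      op_single_of_forall_lt w a _ fun b hb => hl.1 b (List.mem_toFinset.1 hb)]

theorem coords_mono (S : Finset ι) : coords w (mono w S) = Pi.single S 1 := by
  rw [mono, coords_prod_map_gen w (sortedLT_sort S).pairwise, sort_toFinset]

theorem coords_surjective : Function.Surjective (coords w) := fun f =>
  ⟨∑ S, f S • mono w S, by simp only [map_sum, map_smul, coords_mono, ← Pi.single_smul',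
    smul_eq_mul, mul_one, univ_sum_single]⟩

/-- Both sides are free of rank `2 ^ card ι`, and a surjection between such modules over a
commutative ring is injective. -/
theorem coords_injective : Function.Injective (coords w) := by
  obtain ⟨B⟩ := nonempty_basis_finset (weightedSumSquares R w) (Pi.basisFun R ι)
  exact OrzechProperty.injective_of_surjective_of_injective B.equivFun.toLinearMap (coords w)
    B.equivFun.injective (coords_surjective w)

def monoBasis : Module.Basis (Finset ι) R (CliffordAlgebra (weightedSumSquares R w)) :=
  .ofEquivFun (.ofBijective (coords w) ⟨coords_injective w, coords_surjective w⟩)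

theorem monoBasis_apply (S : Finset ι) : monoBasis w S = mono w S := by
  classical
  rw [monoBasis, Module.Basis.coe_ofEquivFun, LinearEquiv.symm_apply_eq]
  exact (coords_mono w S).symm

theorem monoBasis_repr (X : CliffordAlgebra (weightedSumSquares R w)) :
    (monoBasis w).repr X = coords w X := rfl

theorem gen_mul_gen_of_ne {i j : ι} (hij : i ≠ j) :
    gen w i * gen w j = -(gen w j * gen w i) := by
  rw [eq_neg_iff_add_eq_zero]
  apply coords_injective w
  rw [coords_apply, map_add, map_mul, map_mul, rep_gen, rep_gen, op_mul_op_add_swap w hij,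
    map_zero, LinearMap.zero_apply]

theorem prod_map_gen_mul_gen (l : List ι) (i : ι) :
    (l.map (gen w)).prod * gen w i =
      (-1 : R) ^ l.countP (· ≠ i) • (gen w i * (l.map (gen w)).prod) := by
  induction l with
  | nil => simp
  | cons a t ih =>
    rw [List.map_cons, List.prod_cons, mul_assoc, ih, mul_smul_comm, ← mul_assoc,
      List.countP_cons]
    by_cases h : a = i
    · simp [h, mul_assoc]
    · simp [h, gen_mul_gen_of_ne w h, pow_succ, mul_assoc]

theorem mono_mul_gen (S : Finset ι) (i : ι) :
    mono w S * gen w i = (-1 : R) ^ #(S.erase i) • (gen w i * mono w S) := by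
  rw [mono, prod_map_gen_mul_gen, ← filter_ne', card_def, filter_val, ← sort_eq S (· ≤ ·),
    Multiset.filter_coe, Multiset.coe_card, List.countP_eq_length_filter]

theorem involute_prod_map_gen (l : List ι) :
    involute (l.map (gen w)).prod = (-1 : R) ^ l.length • (l.map (gen w)).prod := by
  induction l with
  | nil => simp
  | cons a t ih =>
    rw [List.map_cons, List.prod_cons, map_mul, ih, gen, involute_ι, List.length_cons, pow_succ,
      mul_smul, neg_one_smul, neg_mul, mul_smul_comm, smul_neg]

theorem involute_mono (S : Finset ι) : involute (mono w S) = (-1 : R) ^ #S • mono w S := by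
  rw [mono, involute_prod_map_gen, length_sort]

theorem coords_involute (X : CliffordAlgebra (weightedSumSquares R w)) (S : Finset ι) :
    coords w (involute X) S = (-1) ^ #S * coords w X S := by
  have key : LinearMap.proj S ∘ₗ coords w ∘ₗ involute.toLinearMap =
      (-1 : R) ^ #S • (LinearMap.proj S ∘ₗ coords w) := by
    refine (monoBasis w).ext fun T => ?_
    simp only [LinearMap.comp_apply, LinearMap.smul_apply, monoBasis_apply,
      AlgHom.toLinearMap_apply, involute_mono, map_smul, coords_mono, LinearMap.proj_apply,
      Pi.single_apply, smul_eq_mul]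
    split_ifs with h <;> simp [h]
  exact LinearMap.congr_fun key X

theorem coords_mul_gen (X : CliffordAlgebra (weightedSumSquares R w)) (i : ι) (S : Finset ι) :
    coords w (X * gen w i) S = (-1) ^ #(S.erase i) * coords w (gen w i * X) S := by
  have key : LinearMap.proj S ∘ₗ coords w ∘ₗ LinearMap.mulRight R (gen w i) =
      (-1 : R) ^ #(S.erase i) •
        (LinearMap.proj S ∘ₗ coords w ∘ₗ LinearMap.mulLeft R (gen w i)) := by
    refine (monoBasis w).ext fun T => ?_
    simp only [LinearMap.comp_apply, LinearMap.smul_apply, monoBasis_apply,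
      LinearMap.mulRight_apply, LinearMap.mulLeft_apply, mono_mul_gen, map_smul, coords_gen_mul,
      coords_mono, LinearMap.proj_apply, op_apply, Pi.single_apply, smul_eq_mul]
    split_ifs with h
    · rw [← h, symmDiff_singleton_erase]
    · simp
  exact LinearMap.congr_fun key X

theorem ι_eq_sum_smul_gen (v : ι → R) :
    CliffordAlgebra.ι (weightedSumSquares R w) v = ∑ i, v i • gen w i := by
  conv_lhs => rw [← (Pi.basisFun R ι).sum_repr v]
  simp only [map_sum, map_smul, Pi.basisFun_repr, Pi.basisFun_apply, gen]

theorem forall_mul_comm_iff_forall_mul_gen (X : CliffordAlgebra (weightedSumSquares R w)) :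
    (∀ Y, X * Y = Y * X) ↔ ∀ i, X * gen w i = gen w i * X := by
  refine ⟨fun h i => h _, fun h Y => ?_⟩
  induction Y using CliffordAlgebra.induction with
  | algebraMap r => exact (Algebra.commutes r X).symm
  | ι v =>
    rw [ι_eq_sum_smul_gen, mul_sum, sum_mul]
    exact sum_congr rfl fun i _ => by rw [mul_smul_comm, smul_mul_assoc, h]
  | mul a b ha hb => rw [← mul_assoc, ha, mul_assoc, hb, mul_assoc]
  | add a b ha hb => rw [mul_add, add_mul, ha, hb]

theorem coords_mul_supported_of_mem_adjoin {N : Set ι}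
    {X : CliffordAlgebra (weightedSumSquares R w)} (hX : X ∈ Algebra.adjoin R (gen w '' N))
    {Y : CliffordAlgebra (weightedSumSquares R w)}
    (hY : ∀ S, coords w Y S ≠ 0 → ∀ i ∈ S, i ∈ N) :
    ∀ S, coords w (X * Y) S ≠ 0 → ∀ i ∈ S, i ∈ N := by
  induction hX using Algebra.adjoin_induction generalizing Y with
  | mem x hx =>
    obtain ⟨j, hj, rfl⟩ := hx
    intro S hS i hi
    rw [coords_gen_mul, op_apply] at hS
    by_cases hij : i = j
    · exact hij ▸ hj
    · exact hY _ (right_ne_zero_of_mul hS) i (mem_symmDiff_singleton.2 (by simp [hi, hij]))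
  | algebraMap r =>
    intro S hS
    rw [← Algebra.smul_def, map_smul, Pi.smul_apply, smul_eq_mul] at hS
    exact hY S (right_ne_zero_of_mul hS)
  | add x y _ _ hx hy =>
    intro S hS
    rw [add_mul, map_add, Pi.add_apply] at hS
    by_cases hxS : coords w (x * Y) S = 0
    · exact hy hY S (by simpa [hxS] using hS)
    · exact hx hY S hxS
  | mul x y _ _ hx hy =>
    rw [mul_assoc]
    exact hx (hy hY)

theorem mem_adjoin_gen_iff (N : Set ι) (X : CliffordAlgebra (weightedSumSquares R w)) :
    X ∈ Algebra.adjoin R (gen w '' N) ↔ ∀ S, coords w X S ≠ 0 → ∀ i ∈ S, i ∈ N := by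
  constructor
  · intro hX
    refine mul_one X ▸ coords_mul_supported_of_mem_adjoin w hX fun S hS => ?_
    obtain rfl : S = ∅ := by
      by_contra hne
      exact hS (by rw [coords_one, Pi.single_eq_of_ne hne])
    simp
  · intro h
    rw [← (monoBasis w).sum_repr X]
    refine Subalgebra.sum_mem _ fun S _ => ?_
    by_cases hS : coords w X S = 0
    · simp [monoBasis_repr, hS]
    rw [monoBasis_apply, mono]
    refine Subalgebra.smul_mem _ (Subalgebra.list_prod_mem _ fun x hx => ?_) _
    obtain ⟨i, hi, rfl⟩ := List.mem_map.1 hx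
    exact Algebra.subset_adjoin ⟨i, h S hS i (mem_sort _ |>.1 hi), rfl⟩

section Center

variable [NoZeroDivisors R] [CharZero R]

theorem involute_eq_self_iff (X : CliffordAlgebra (weightedSumSquares R w)) :
    involute X = X ↔ ∀ S, coords w X S ≠ 0 → Even #S := by
  rw [← (coords_injective w).eq_iff, funext_iff]
  simp only [coords_involute, neg_one_pow_mul_eq_self_iff]
  exact forall_congr' fun S => by tauto

theorem mul_gen_eq_gen_mul_iff (X : CliffordAlgebra (weightedSumSquares R w)) (i : ι) :
    X * gen w i = gen w i * X ↔
      ∀ T, coords w X T ≠ 0 → Odd #(T.erase i) → i ∈ T ∧ w i = 0 := by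
  rw [← (coords_injective w).eq_iff, funext_iff,
    ← (symmDiff_left_involutive {i}).toPerm.forall_congr_right]
  simp only [Function.Involutive.coe_toPerm, coords_mul_gen, coords_gen_mul, op_apply,
    symmDiff_symmDiff_cancel_right, symmDiff_singleton_erase, neg_one_pow_mul_eq_self_iff,
    mul_eq_zero, coeff_symmDiff_self_eq_zero_iff, ← Nat.not_even_iff_odd]
  exact forall_congr' fun T => by tauto

theorem forall_mul_comm_iff (hn : Even (Fintype.card ι))
    (X : CliffordAlgebra (weightedSumSquares R w)) :
    (∀ Y, X * Y = Y * X) ↔ ∀ S, coords w X S ≠ 0 → Even #S ∧ ∀ i ∈ S, w i = 0 := by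
  simp only [forall_mul_comm_iff_forall_mul_gen, mul_gen_eq_gen_mul_iff]
  rw [forall_comm]
  refine forall_congr' fun S => ?_
  rw [← imp_forall_iff, forall_odd_card_erase_iff hn]

theorem forall_mul_comm_iff_mem_adjoin_and_involute (hn : Even (Fintype.card ι))
    (X : CliffordAlgebra (weightedSumSquares R w)) :
    (∀ Y, X * Y = Y * X) ↔
      X ∈ Algebra.adjoin R (gen w '' {i | w i = 0}) ∧ involute X = X := by
  rw [forall_mul_comm_iff w hn, mem_adjoin_gen_iff, involute_eq_self_iff]
  simp only [imp_and, forall_and, Set.mem_ofPred_eq]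
  exact and_comm

end Center

end DiagonalClifford

theorem cliffSig_eq_zero_iff (p q i : ℕ) : cliffSig p q i = 0 ↔ p + q ≤ i := by
  unfold cliffSig
  split_ifs with h1 h2 <;> norm_num <;> omega

theorem lambdaR_eq_adjoin (p q r : ℕ) :
    LambdaR p q r = Algebra.adjoin ℝ
      (DiagonalClifford.gen (fun i : Fin (p + q + r) => cliffSig p q i) ''
        {i | cliffSig p q i = 0}) := by
  unfold LambdaR
  congr 1
  ext x
  simp only [cliffSig_eq_zero_iff, Set.mem_ofPred_eq, eq_comm (a := x)]
  rfl

theorem lambdaR_zero (p q : ℕ) : LambdaR p q 0 = ⊥ := by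
  rw [LambdaR, ← Algebra.adjoin_empty]
  congr 1
  ext x
  simp

/-- For `n = p + q + r` even, the center of `Cl(p,q,r)` is the even part of `Λ_r`.
In particular, for a non-degenerate form (`r = 0`) of even dimension the center consists
only of the scalars. -/
theorem stmt15 (p q r : ℕ) (hn : Even (p + q + r)) (X : CliffordAlgebra (Qf p q r)) :
    ((∀ Y : CliffordAlgebra (Qf p q r), X * Y = Y * X) ↔
      (X ∈ LambdaR p q r ∧ involute X = X)) ∧
    (r = 0 → ((∀ Y : CliffordAlgebra (Qf p q r), X * Y = Y * X) ↔
      ∃ c : ℝ, X = algebraMap ℝ (CliffordAlgebra (Qf p q r)) c)) := by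
  have hcenter : (∀ Y : CliffordAlgebra (Qf p q r), X * Y = Y * X) ↔
      X ∈ LambdaR p q r ∧ involute X = X := by
    rw [lambdaR_eq_adjoin]
    exact DiagonalClifford.forall_mul_comm_iff_mem_adjoin_and_involute _ (by simpa using hn) X
  refine ⟨hcenter, ?_⟩
  rintro rfl
  rw [hcenter, lambdaR_zero, Algebra.mem_bot]
  constructor
  · rintro ⟨⟨c, rfl⟩, -⟩
    exact ⟨c, rfl⟩
  · rintro ⟨c, rfl⟩
    exact ⟨⟨c, rfl⟩, involute.commutes c⟩
end
end

section
/- Let Cl(p,q,r) be a Clifford algebra with n = p+q+r. For odd m with 1 ≤ m ≤ n−2, the centralizer of the grade-m subspace is contained in the centralizer of the grade-(m+2) subspace, and the twisted centralizer of the grade-m subspace is contained in the twisted centralizer of the grade-(m+2) subspace. -/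
open CliffordAlgebra

noncomputable section

/-! The ordered monomials `e_s = e_{i₁} ⋯ e_{iₖ}` (`s = {i₁ < ⋯ < iₖ}`) of an orthogonal basis
form a basis of the Clifford algebra (the exterior basis transported by `equivExterior`), with
`e_s e_t ∈ R ∙ e_{s ∆ t}` and `e_s e_t = (-1)^(|s||t| + |s ∩ t|) e_t e_s`. Hence the twisted
commutator `X ↦ θ X * e_t - e_t * X` sends distinct basis vectors to distinct lines, and `X`
twisted-commutes with every `e_t`, `|t| = m`, iff each component `c_s e_s` does, i.e. iff the sign
exponent is even or `c_s e_s e_t = 0`. For `|u| = m + 2` delete two elements of `u` lying both in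
`s` or both outside `s`: the exponent keeps its parity, and `e_u` is up to sign the product of the
remaining monomial `e_t` with the two deleted generators, so `c_s e_s e_t = 0` forces
`c_s e_s e_u = 0`. -/

open Finset Module

theorem neg_one_pow_sub_neg_one_pow_smul_eq_zero_iff {R N : Type*} [CommRing R] [Invertible (2 : R)]
    [AddCommGroup N] [Module R N] (a b : ℕ) (y : N) :
    ((-1 : R) ^ a - (-1) ^ b) • y = 0 ↔ Even (a + b) ∨ y = 0 := by
  have h2 : (2 : R) • y = 0 ↔ y = 0 := (isUnit_of_invertible (2 : R)).smul_eq_zero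
  rcases Nat.even_or_odd a with ha | ha <;> rcases Nat.even_or_odd b with hb | hb
  · simp [ha.neg_one_pow, hb.neg_one_pow, ha.add hb]
  · simp [ha.neg_one_pow, hb.neg_one_pow, ← h2, Nat.even_add, ha, Nat.not_even_iff_odd.mpr hb,
      one_add_one_eq_two]
  · simp [ha.neg_one_pow, hb.neg_one_pow, ← h2, Nat.even_add, hb, Nat.not_even_iff_odd.mpr ha,
      show (-1 - 1 : R) = -2 by norm_num]
  · simp [ha.neg_one_pow, hb.neg_one_pow, ha.add_odd hb]

theorem Finset.exists_ne_mem_iff_mem {α : Type*} (s : Finset α) {u : Finset α} (hu : 2 < #u) :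
    ∃ a ∈ u, ∃ b ∈ u, a ≠ b ∧ (a ∈ s ↔ b ∈ s) := by
  classical
  obtain ⟨a, ha, b, hb, hab, h⟩ := Finset.exists_ne_map_eq_of_card_lt_of_maps_to
    (t := (Finset.univ : Finset Bool)) (by simpa using hu) (f := fun a => decide (a ∈ s))
    (fun _ _ => Finset.mem_coe.mpr (Finset.mem_univ _))
  exact ⟨a, ha, b, hb, hab, by simpa using h⟩

theorem Finset.even_card_inter_pair {α : Type*} [DecidableEq α] {s : Finset α} {a b : α}
    (hab : a ≠ b) (h : a ∈ s ↔ b ∈ s) :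
    Even #(s ∩ {a, b}) := by
  by_cases ha : a ∈ s
  · rw [inter_eq_right.mpr (by simp [insert_subset_iff, ha, h.mp ha]), card_pair hab]
    exact even_two
  · rw [show s ∩ {a, b} = ∅ by simp [ha, ← h]]
    exact ⟨0, rfl⟩

theorem Finset.ofFn_orderEmbOfFin {α κ : Type*} [LinearOrder κ] (s : Finset κ) {k : ℕ} (h : #s = k)
    (f : κ → α) : List.ofFn (fun i => f (s.orderEmbOfFin h i)) = s.sort.map f := by
  subst h
  refine List.ext_getElem (by simp) fun n _ _ => ?_
  simp [orderEmbOfFin_apply]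

theorem Module.Basis.map_repr_smul_eq_zero {R N N' κ κ' : Type*} [CommSemiring R]
    [AddCommMonoid N] [Module R N] [AddCommMonoid N'] [Module R N'] (b : Basis κ R N)
    (b' : Basis κ' R N') (f : N →ₗ[R] N') {g : κ → κ'} (hg : Function.Injective g)
    (hf : ∀ i, f (b i) ∈ R ∙ b' (g i)) {x : N} (hx : f x = 0) (i : κ) :
    f (b.repr x i • b i) = 0 := by
  choose μ hμ using fun j => Submodule.mem_span_singleton.mp (hf j)
  have hcoord : (b'.coord (g i)).comp f = μ i • b.coord i := b.ext fun j => by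
    by_cases hj : j = i
    · subst hj
      simp [← hμ]
    · simp [← hμ, hj, hg.ne hj]
  have hμx : μ i * b.repr x i = 0 := by simpa [hx] using (LinearMap.congr_fun hcoord x).symm
  rw [map_smul, ← hμ, smul_smul, mul_comm, hμx, zero_smul]

namespace CliffordAlgebra

variable {R M κ : Type*} [CommRing R] [AddCommGroup M] [Module R M] {Q : QuadraticForm R M}

theorem contractLeft_prod_map_ι_eq_zero (d : Module.Dual R M) :
    ∀ l : List M, (∀ x ∈ l, d x = 0) → contractLeft d (l.map (ι Q)).prod = 0
  | [], _ => by simp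
  | x :: l, h => by
    rw [List.map_cons, List.prod_cons, contractLeft_ι_mul, h x List.mem_cons_self,
      contractLeft_prod_map_ι_eq_zero d l fun y hy => h y (List.mem_cons_of_mem x hy)]
    simp

theorem changeForm_prod_map_ι {Q' : QuadraticForm R M} {B : LinearMap.BilinForm R M}
    (h : B.toQuadraticMap = Q' - Q) :
    ∀ l : List M, l.Pairwise (fun x y => B x y = 0) →
      changeForm h (l.map (ι Q)).prod = (l.map (ι Q')).prod
  | [], _ => by simp
  | x :: l, hl => by
    obtain ⟨hx, hl⟩ := List.pairwise_cons.mp hl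
    rw [List.map_cons, List.prod_cons, changeForm_ι_mul, changeForm_prod_map_ι h l hl,
      contractLeft_prod_map_ι_eq_zero _ l hx, sub_zero, List.map_cons, List.prod_cons]

def ιProd (Q : QuadraticForm R M) (v : κ → M) (l : List κ) : CliffordAlgebra Q :=
  (l.map fun i => ι Q (v i)).prod

section ιProd

variable {v : κ → M}

@[simp]
theorem ιProd_nil : ιProd Q v [] = 1 := rfl

@[simp]
theorem ιProd_cons (i : κ) (l : List κ) : ιProd Q v (i :: l) = ι Q (v i) * ιProd Q v l := by
  simp [ιProd]

@[simp]
theorem ιProd_append (l l' : List κ) : ιProd Q v (l ++ l') = ιProd Q v l * ιProd Q v l' := by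
  simp [ιProd]

theorem involute_ιProd (l : List κ) :
    involute (ιProd Q v l) = (-1 : R) ^ l.length • ιProd Q v l := by
  simpa [ιProd, List.map_map, Function.comp_def] using involute_prod_map_ι (Q := Q) (l.map v)

variable (hv : Pairwise fun i j => Q.IsOrtho (v i) (v j))
include hv

theorem ιProd_perm {l l' : List κ} (h : l.Perm l') :
    ∃ k : ℕ, ιProd Q v l' = (-1 : R) ^ k • ιProd Q v l := by
  induction h with
  | nil => exact ⟨0, by simp⟩
  | cons i _ ih =>
    obtain ⟨k, hk⟩ := ih
    exact ⟨k, by rw [ιProd_cons, ιProd_cons, hk, mul_smul_comm]⟩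
  | swap i j l =>
    by_cases hij : i = j
    · exact ⟨0, by simp [hij]⟩
    · refine ⟨1, ?_⟩
      rw [ιProd_cons, ιProd_cons, ιProd_cons, ιProd_cons, ← mul_assoc, ← mul_assoc,
        ι_mul_ι_comm_of_isOrtho (hv hij)]
      simp
  | trans _ _ ih₁ ih₂ =>
    obtain ⟨k₁, hk₁⟩ := ih₁
    obtain ⟨k₂, hk₂⟩ := ih₂
    exact ⟨k₂ + k₁, by rw [hk₂, hk₁, smul_smul, pow_add]⟩

theorem ιProd_append_self (l : List κ) : ∃ r : R, ιProd Q v (l ++ l) = algebraMap R _ r := by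
  induction l with
  | nil => exact ⟨1, by simp⟩
  | cons i l ih =>
    obtain ⟨r, hr⟩ := ih
    obtain ⟨k, hk⟩ := ιProd_perm hv (List.perm_middle (a := i) (l₁ := l) (l₂ := l)).symm
    refine ⟨(-1) ^ k * Q (v i) * r, ?_⟩
    rw [List.cons_append, ιProd_cons, hk, ιProd_cons, mul_smul_comm, ← mul_assoc, ι_sq_scalar,
      hr, Algebra.smul_def, ← map_mul, ← map_mul]
    ring_nf

theorem ι_mul_ιProd_comm [DecidableEq κ] (i : κ) (l : List κ) :
    ι Q (v i) * ιProd Q v l = (-1 : R) ^ (l.length + l.count i) • (ιProd Q v l * ι Q (v i)) := by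
  induction l with
  | nil => simp
  | cons j l ih =>
    rw [ιProd_cons, List.length_cons, ← mul_assoc, mul_assoc _ _ (ι Q (v i))]
    by_cases hij : i = j
    · subst hij
      rw [List.count_cons_self, mul_assoc, ih, mul_smul_comm]
      congr 1
      ring
    · rw [ι_mul_ι_comm_of_isOrtho (hv hij), List.count_cons_of_ne (Ne.symm hij), neg_mul,
        mul_assoc, ih, mul_smul_comm, ← neg_smul]
      congr 1
      ring

end ιProd

section Sorted

variable [LinearOrder κ] {v : κ → M} (hv : Pairwise fun i j => Q.IsOrtho (v i) (v j))
include hv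

theorem ιProd_sort_mul_ιProd_sort_comm (s t : Finset κ) :
    ιProd Q v s.sort * ιProd Q v t.sort =
      (-1 : R) ^ (#s * #t + #(s ∩ t)) • (ιProd Q v t.sort * ιProd Q v s.sort) := by
  induction s using Finset.induction_on_min with
  | empty => simp
  | insert a s has ih =>
    have ha : a ∉ s := fun h => lt_irrefl a (has a h)
    have hcount : t.sort.count a + #(s ∩ t) = #(insert a s ∩ t) := by
      by_cases hat : a ∈ t
      · rw [List.count_eq_one_of_mem (sort_nodup _ _) ((mem_sort _).mpr hat),
          insert_inter_of_mem hat, card_insert_of_notMem fun h => ha (mem_inter.mp h).1, add_comm]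
      · rw [List.count_eq_zero_of_not_mem (by simpa), insert_inter_of_notMem hat, zero_add]
    rw [sort_insert _ (fun b hb => (has b hb).le) ha, ιProd_cons, mul_assoc, ih, mul_smul_comm,
      ← mul_assoc, ι_mul_ιProd_comm hv, smul_mul_assoc, smul_smul, mul_assoc, ← pow_add,
      card_insert_of_notMem ha, length_sort, ← hcount]
    congr 1
    ring

theorem ιProd_sort_mul_ιProd_sort_mem_span (s t : Finset κ) :
    ιProd Q v s.sort * ιProd Q v t.sort ∈ R ∙ ιProd Q v (symmDiff s t).sort := by
  have hperm :
      ((symmDiff s t).sort ++ ((s ∩ t).sort ++ (s ∩ t).sort)).Perm (s.sort ++ t.sort) := by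
    rw [← Multiset.coe_eq_coe, ← Multiset.coe_add, ← Multiset.coe_add, ← Multiset.coe_add]
    simp only [sort_eq]
    ext a
    simp only [Multiset.count_add, Multiset.count_eq_of_nodup (Finset.nodup _), ← Finset.mem_def,
      mem_symmDiff, mem_inter]
    by_cases ha : a ∈ s <;> by_cases hb : a ∈ t <;> simp [ha, hb]
  obtain ⟨k, hk⟩ := ιProd_perm hv hperm
  obtain ⟨r, hr⟩ := ιProd_append_self hv (s ∩ t).sort
  refine Submodule.mem_span_singleton.mpr ⟨(-1) ^ k * r, ?_⟩
  rw [← ιProd_append, hk, ιProd_append, hr, ← Algebra.commutes, ← Algebra.smul_def, smul_smul]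

theorem ιProd_sort_eq_sdiff_mul {s u : Finset κ} (hus : u ⊆ s) :
    ∃ k : ℕ, ιProd Q v s.sort = (-1 : R) ^ k • (ιProd Q v (s \ u).sort * ιProd Q v u.sort) := by
  have hperm : ((s \ u).sort ++ u.sort).Perm s.sort := by
    refine List.perm_of_nodup_nodup_toFinset_eq ?_ (sort_nodup _ _) ?_
    · exact (sort_nodup _ _).append (sort_nodup _ _) (List.disjoint_left.mpr fun a ha ha' => by
        simp_all)
    · simp [sdiff_union_of_subset hus]
  obtain ⟨k, hk⟩ := ιProd_perm hv hperm
  exact ⟨k, by rw [hk, ιProd_append]⟩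

theorem even_or_smul_ιProd_mul_eq_zero_of_card_add_two {e m : ℕ} {c : R} {s : Finset κ}
    (hm : 1 ≤ m) (h : ∀ t : Finset κ, #t = m →
      Even (e + #s * #t + #(s ∩ t)) ∨ c • (ιProd Q v s.sort * ιProd Q v t.sort) = 0)
    {u : Finset κ} (hu : #u = m + 2) :
    Even (e + #s * #u + #(s ∩ u)) ∨ c • (ιProd Q v s.sort * ιProd Q v u.sort) = 0 := by
  obtain ⟨a, ha, b, hb, hab, hs⟩ := s.exists_ne_mem_iff_mem (by omega : 2 < #u)
  have hpair : {a, b} ⊆ u := by simp [insert_subset_iff, ha, hb]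
  set t := u \ {a, b}
  have ht : #t = m := by rw [card_sdiff_of_subset hpair, card_pair hab, hu]; omega
  have hparity : Even (e + #s * #u + #(s ∩ u)) ↔ Even (e + #s * #t + #(s ∩ t)) := by
    obtain ⟨z, hz⟩ := s.even_card_inter_pair hab hs
    have hsplit := card_sdiff_add_card_inter (s ∩ u) {a, b}
    rw [inter_sdiff_assoc, inter_assoc, inter_eq_right.mpr hpair, hz] at hsplit
    rw [← hsplit, hu, ht, show e + #s * (m + 2) + (#(s ∩ t) + (z + z)) =
      e + #s * m + #(s ∩ t) + 2 * (#s + z) by ring, Nat.even_add, iff_true_right (even_two_mul _)]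
  rcases h t ht with heven | hzero
  · exact Or.inl (hparity.mpr heven)
  · right
    obtain ⟨k, hk⟩ := ιProd_sort_eq_sdiff_mul hv hpair
    rw [hk, mul_smul_comm, smul_comm, ← mul_assoc, ← smul_mul_assoc, hzero, zero_mul, smul_zero]

end Sorted

section OrthogonalBasis

variable [LinearOrder κ] [Invertible (2 : R)]

def _root_.Module.Basis.cliffordAlgebra (b : Basis κ R M) :
    Basis (Finset κ) R (CliffordAlgebra Q) :=
  b.ExteriorAlgebra.map (equivExterior Q).symm

theorem _root_.Module.Basis.cliffordAlgebra_apply (b : Basis κ R M)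
    (hb : Pairwise fun i j => Q.IsOrtho (b i) (b j)) (s : Finset κ) :
    b.cliffordAlgebra s = ιProd Q b s.sort := by
  rw [Basis.cliffordAlgebra, Basis.map_apply, ExteriorAlgebra.basis_apply]
  change (equivExterior Q).symm (List.ofFn fun i : Fin #s =>
    ExteriorAlgebra.ι R (b (s.orderEmbOfFin rfl i))).prod = _
  rw [s.ofFn_orderEmbOfFin rfl (fun i => ExteriorAlgebra.ι R (b i))]
  have hpair : (s.sort.map b).Pairwise fun x y =>
      (-QuadraticMap.associated (R := R) (-Q)) x y = 0 := by
    refine List.pairwise_map.mpr ((sortedLT_sort s).pairwise.imp fun hij => ?_)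
    simp only [LinearMap.neg_apply, map_neg, neg_neg]
    exact QuadraticMap.associated_isOrtho.mpr (hb hij.ne)
  simpa [ιProd, List.map_map, Function.comp_def] using
    changeForm_prod_map_ι (changeForm.neg_proof changeForm.associated_neg_proof) _ hpair

theorem apply_mul_ιProd_sort_eq_of_card_add_two {b : Basis κ R M}
    (hb : Pairwise fun i j => Q.IsOrtho (b i) (b j))
    (θ : CliffordAlgebra Q →ₗ[R] CliffordAlgebra Q) (ε : Finset κ → ℕ)
    (hθ : ∀ s : Finset κ, θ (ιProd Q b s.sort) = (-1 : R) ^ ε s • ιProd Q b s.sort)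
    {m : ℕ} (hm : 1 ≤ m) {X : CliffordAlgebra Q}
    (hX : ∀ t : Finset κ, #t = m → θ X * ιProd Q b t.sort = ιProd Q b t.sort * X)
    {u : Finset κ} (hu : #u = m + 2) :
    θ X * ιProd Q b u.sort = ιProd Q b u.sort * X := by
  set E : Finset κ → CliffordAlgebra Q := fun s => ιProd Q b s.sort
  set B : Basis (Finset κ) R (CliffordAlgebra Q) := b.cliffordAlgebra
  have hB : ∀ s, B s = E s := b.cliffordAlgebra_apply hb
  set φ : CliffordAlgebra Q → CliffordAlgebra Q →ₗ[R] CliffordAlgebra Q :=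
    fun V => LinearMap.mulRight R V ∘ₗ θ - LinearMap.mulLeft R V
  have hφ : ∀ (c : R) s t, φ (E t) (c • E s) =
      ((-1 : R) ^ ε s - (-1) ^ (#s * #t + #(s ∩ t))) • c • (E s * E t) := by
    intro c s t
    simp only [φ, LinearMap.sub_apply, LinearMap.comp_apply, LinearMap.mulRight_apply,
      LinearMap.mulLeft_apply, map_smul, hθ, E]
    rw [ιProd_sort_mul_ιProd_sort_comm hb t s, mul_comm #t, inter_comm]
    module
  have hφ_iff : ∀ (c : R) s t, φ (E t) (c • E s) = 0 ↔
      Even (ε s + #s * #t + #(s ∩ t)) ∨ c • (E s * E t) = 0 := by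
    intro c s t
    rw [hφ, neg_one_pow_sub_neg_one_pow_smul_eq_zero_iff, add_assoc]
  have hcomponent : ∀ s t, #t = m → φ (E t) (B.repr X s • E s) = 0 := by
    intro s t ht
    rw [← hB s]
    refine B.map_repr_smul_eq_zero B (φ (E t)) (symmDiff_left_injective t) (fun s => ?_) ?_ s
    · have h1 := hφ 1 s t
      rw [one_smul, one_smul] at h1
      rw [hB s, h1, hB]
      exact Submodule.smul_mem _ _ (ιProd_sort_mul_ιProd_sort_mem_span hb s t)
    · exact sub_eq_zero.mpr (hX t ht)
  have hφX : φ (E u) X = 0 := by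
    rw [← B.linearCombination_repr X, Finsupp.linearCombination_apply, map_finsuppSum]
    refine Finset.sum_eq_zero fun s _ => ?_
    dsimp only
    rw [hB, hφ_iff]
    exact even_or_smul_ιProd_mul_eq_zero_of_card_add_two hb hm
      (fun t ht => (hφ_iff _ s t).mp (hcomponent s t ht)) hu
  exact sub_eq_zero.mp hφX

end OrthogonalBasis
end CliffordAlgebra

theorem QuadraticMap.isOrtho_weightedSumSquares_single {R ι : Type*} [CommRing R] [Fintype ι]
    [DecidableEq ι] (w : ι → R) {i j : ι} (hij : i ≠ j) :
    (weightedSumSquares R w).IsOrtho (Pi.single i 1) (Pi.single j 1) := by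
  simp only [isOrtho_def, weightedSumSquares_apply, ← Finset.sum_add_distrib]
  refine Finset.sum_congr rfl fun k _ => ?_
  by_cases hi : k = i <;> by_cases hj : k = j <;> simp_all

theorem forall_mem_span_mul_eq_mul_iff {R A : Type*} [CommRing R] [Ring A] [Algebra R A]
    (S : Set A) (x y : A) :
    (∀ V ∈ Submodule.span R S, x * V = V * y) ↔ ∀ V ∈ S, x * V = V * y := by
  simpa [SetLike.le_def, Set.subset_def, sub_eq_zero] using
    Submodule.span_le (p := LinearMap.ker (LinearMap.mulLeft R x - LinearMap.mulRight R y))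

theorem gradeSubspace_eq_span (p q r m : ℕ) :
    gradeSubspace p q r m = Submodule.span ℝ
      ((fun s => ιProd (Qf p q r) (Pi.basisFun ℝ _) s.sort) '' {s | #s = m}) := by
  have hprod : ∀ l, ιProd (Qf p q r) (Pi.basisFun ℝ _) l = (l.map (gen p q r)).prod := by
    intro l
    simp only [ιProd, Pi.basisFun_apply]
    rfl
  rw [gradeSubspace]
  congr 1
  ext x
  constructor
  · rintro ⟨l, hl, hlen, rfl⟩
    have hsorted : l.Pairwise (· < ·) := List.isChain_iff_pairwise.mp hl
    refine ⟨l.toFinset, ?_, ?_⟩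
    · rw [Set.mem_ofPred_eq, List.toFinset_card_of_nodup hsorted.nodup, hlen]
    · dsimp only
      rw [hprod, (List.toFinset_sort _ hsorted.nodup).mpr (hsorted.imp le_of_lt)]
  · rintro ⟨s, hs, rfl⟩
    exact ⟨s.sort, List.isChain_iff_pairwise.mpr (sortedLT_sort s).pairwise,
      by rw [length_sort, hs], (hprod _)⟩

theorem mul_eq_mul_of_forall_mem_gradeSubspace {p q r m : ℕ} (hm : 1 ≤ m)
    (θ : CliffordAlgebra (Qf p q r) →ₗ[ℝ] CliffordAlgebra (Qf p q r))
    (ε : Finset (Fin (p + q + r)) → ℕ)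
    (hθ : ∀ s, θ (ιProd (Qf p q r) (Pi.basisFun ℝ _) s.sort) =
      (-1 : ℝ) ^ ε s • ιProd (Qf p q r) (Pi.basisFun ℝ _) s.sort)
    {X : CliffordAlgebra (Qf p q r)} (hX : ∀ V ∈ gradeSubspace p q r m, θ X * V = V * X) :
    ∀ V ∈ gradeSubspace p q r (m + 2), θ X * V = V * X := by
  have hb : Pairwise fun i j => (Qf p q r).IsOrtho (Pi.basisFun ℝ _ i) (Pi.basisFun ℝ _ j) :=
    fun i j hij => by
      dsimp only
      rw [Pi.basisFun_apply, Pi.basisFun_apply]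
      exact QuadraticMap.isOrtho_weightedSumSquares_single _ hij
  simp only [gradeSubspace_eq_span, forall_mem_span_mul_eq_mul_iff, Set.forall_mem_image,
    Set.mem_ofPred_eq] at hX ⊢
  exact fun u hu => apply_mul_ιProd_sort_eq_of_card_add_two hb θ ε hθ hm hX hu

theorem stmt17_general (p q r m : ℕ) (hm1 : 1 ≤ m) :
    (∀ X : CliffordAlgebra (Qf p q r),
      (∀ V ∈ gradeSubspace p q r m, X * V = V * X) →
      ∀ V ∈ gradeSubspace p q r (m + 2), X * V = V * X) ∧
    (∀ X : CliffordAlgebra (Qf p q r),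
      (∀ V ∈ gradeSubspace p q r m, involute X * V = V * X) →
      ∀ V ∈ gradeSubspace p q r (m + 2), involute X * V = V * X) :=
  ⟨fun _ => mul_eq_mul_of_forall_mem_gradeSubspace hm1 LinearMap.id 0 (by simp),
    fun _ => mul_eq_mul_of_forall_mem_gradeSubspace hm1 involute.toLinearMap Finset.card
      (by simp [involute_ιProd])⟩

/-- For odd `m` with `1 ≤ m ≤ n - 2`, the (twisted) centralizer of the grade-`m` subspace
is contained in the (twisted) centralizer of the grade-`(m+2)` subspace. -/
theorem stmt17 (p q r m : ℕ) (hm : Odd m) (hm1 : 1 ≤ m) (hm2 : m ≤ p + q + r - 2) :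
    (∀ X : CliffordAlgebra (Qf p q r),
      (∀ V ∈ gradeSubspace p q r m, X * V = V * X) →
      ∀ V ∈ gradeSubspace p q r (m + 2), X * V = V * X) ∧
    (∀ X : CliffordAlgebra (Qf p q r),
      (∀ V ∈ gradeSubspace p q r m, involute X * V = V * X) →
      ∀ V ∈ gradeSubspace p q r (m + 2), involute X * V = V * X) :=
  stmt17_general p q r m hm1

end
end
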